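/- Fix an initial state x ∈ ℝ^n, a disturbance bound μ₀ ≥ 0, and a horizon N. Then the effort metric under the linear closed-loop controller satisfies: inf{ ε ≥ 0 : there exist α₁ ∈ ℝ^{m×n}, α₂ ∈ ℝ^m such that for every disturbance sequence d(0), …, d(N−1) with ‖d(i)‖∞ ≤ μ₀, the closed-loop trajectory x(0) = x, x(k+1) = A_k x(k) + B_k (α₁ x(k) + α₂) + d(k) satisfies G_k x(k) ≤ H_k for all k = 0, …, N and ‖α₁ x(k) + α₂‖∞ ≤ ε for all k = 0, …, N−1 } = inf{ ε ≥ 0 : there exist α₁ ∈ ℝ^{m×n}, α₂ ∈ ℝ^m and a nonnegative matrix P ∈ ℝ^{((N+1)q + 2mN) × 2n(N+1)} with P A_b = μ₀ E^{cl}(α₁) and P B_b ≤ F^{cl}(x, α₁, α₂, ε) }. -/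

import Mathlib

/-!
For fixed gains `(α₁, α₂)` the closed-loop state is affine in the stacked disturbance `w`:
`x(k) = F_k + E_k w` (variation of constants). Hence the robust state and input constraints are
the linear inequalities `E^cl w ≤ F^cl`, required for all `w` in the box `‖w‖∞ ≤ μ₀`. A single row
`e ⬝ w ≤ f` holds on the box iff `μ₀ ‖e‖₁ ≤ f` (test `w = μ₀ sign e`), and the same `ℓ¹` bound is
exactly the existence of a nonnegative multiplier row `P = ((μ₀ e)⁺, (μ₀ e)⁻)` with
`P A_b = μ₀ e`, `P B_b ≤ f`. So both sets of admissible `ε` coincide, and so do their infima.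
-/

open Matrix Finset

noncomputable section

/-- Ordered product `M (k-1) * M (k-2) * ⋯ * M i` (empty product = identity when `k ≤ i`). -/
def mprod {n : ℕ} (M : ℕ → Matrix (Fin n) (Fin n) ℝ) (i k : ℕ) :
    Matrix (Fin n) (Fin n) ℝ :=
  (((List.range' i (k - i)).reverse).map M).prod

def Abar {n m : ℕ} (A : ℕ → Matrix (Fin n) (Fin n) ℝ) (B : ℕ → Matrix (Fin n) (Fin m) ℝ)
    (α₁ : Matrix (Fin m) (Fin n) ℝ) (j : ℕ) : Matrix (Fin n) (Fin n) ℝ :=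
  A j + B j * α₁

def trajCL {n m : ℕ} (A : ℕ → Matrix (Fin n) (Fin n) ℝ) (B : ℕ → Matrix (Fin n) (Fin m) ℝ)
    (α₁ : Matrix (Fin m) (Fin n) ℝ) (α₂ : Fin m → ℝ) (d : ℕ → Fin n → ℝ)
    (x0 : Fin n → ℝ) : ℕ → Fin n → ℝ
  | 0 => x0
  | k + 1 =>
      (A k).mulVec (trajCL A B α₁ α₂ d x0 k)
        + (B k).mulVec (α₁.mulVec (trajCL A B α₁ α₂ d x0 k) + α₂) + d k

def Eblk {n : ℕ} (N : ℕ) (M : ℕ → Matrix (Fin n) (Fin n) ℝ) (k : ℕ) :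
    Matrix (Fin n) (Fin (N + 1) × Fin n) ℝ :=
  Matrix.of fun r jc =>
    if 1 ≤ (jc.1 : ℕ) ∧ (jc.1 : ℕ) ≤ k then mprod M (jc.1 : ℕ) k r jc.2 else 0

def Fblk {n m : ℕ} (A : ℕ → Matrix (Fin n) (Fin n) ℝ) (B : ℕ → Matrix (Fin n) (Fin m) ℝ)
    (α₁ : Matrix (Fin m) (Fin n) ℝ) (α₂ : Fin m → ℝ) (x : Fin n → ℝ) (k : ℕ) : Fin n → ℝ :=
  (mprod (Abar A B α₁) 0 k).mulVec x
    + ∑ i ∈ Finset.range k, (mprod (Abar A B α₁) (i + 1) k * B i).mulVec α₂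

def Ex {n m q : ℕ} (N : ℕ) (A : ℕ → Matrix (Fin n) (Fin n) ℝ)
    (B : ℕ → Matrix (Fin n) (Fin m) ℝ) (G : ℕ → Matrix (Fin q) (Fin n) ℝ)
    (α₁ : Matrix (Fin m) (Fin n) ℝ) :
    Matrix (Fin (N + 1) × Fin q) (Fin (N + 1) × Fin n) ℝ :=
  Matrix.of fun kr jc => (G (kr.1 : ℕ) * Eblk N (Abar A B α₁) (kr.1 : ℕ)) kr.2 jc

def Fx {n m q : ℕ} (N : ℕ) (A : ℕ → Matrix (Fin n) (Fin n) ℝ)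
    (B : ℕ → Matrix (Fin n) (Fin m) ℝ) (G : ℕ → Matrix (Fin q) (Fin n) ℝ)
    (H : ℕ → Fin q → ℝ) (α₁ : Matrix (Fin m) (Fin n) ℝ) (α₂ : Fin m → ℝ)
    (x : Fin n → ℝ) : Fin (N + 1) × Fin q → ℝ :=
  fun kr => H (kr.1 : ℕ) kr.2 - (G (kr.1 : ℕ)).mulVec (Fblk A B α₁ α₂ x (kr.1 : ℕ)) kr.2

def Au (m : ℕ) : Matrix (Fin m ⊕ Fin m) (Fin m) ℝ := Matrix.fromRows 1 (-1)

def Sk {n m : ℕ} (A : ℕ → Matrix (Fin n) (Fin n) ℝ) (B : ℕ → Matrix (Fin n) (Fin m) ℝ)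
    (α₁ : Matrix (Fin m) (Fin n) ℝ) (α₂ : Fin m → ℝ) (x : Fin n → ℝ) (k : ℕ) : Fin m → ℝ :=
  α₁.mulVec (Fblk A B α₁ α₂ x k) + α₂

def Ecl {n m q : ℕ} (N : ℕ) (A : ℕ → Matrix (Fin n) (Fin n) ℝ)
    (B : ℕ → Matrix (Fin n) (Fin m) ℝ) (G : ℕ → Matrix (Fin q) (Fin n) ℝ)
    (α₁ : Matrix (Fin m) (Fin n) ℝ) :
    Matrix ((Fin (N + 1) × Fin q) ⊕ (Fin N × (Fin m ⊕ Fin m))) (Fin (N + 1) × Fin n) ℝ :=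
  Matrix.fromRows (Ex N A B G α₁)
    (Matrix.of fun kr jc => (Au m * α₁ * Eblk N (Abar A B α₁) (kr.1 : ℕ)) kr.2 jc)

def Fcl {n m q : ℕ} (N : ℕ) (A : ℕ → Matrix (Fin n) (Fin n) ℝ)
    (B : ℕ → Matrix (Fin n) (Fin m) ℝ) (G : ℕ → Matrix (Fin q) (Fin n) ℝ)
    (H : ℕ → Fin q → ℝ) (α₁ : Matrix (Fin m) (Fin n) ℝ) (α₂ : Fin m → ℝ)
    (x : Fin n → ℝ) (ε : ℝ) : (Fin (N + 1) × Fin q) ⊕ (Fin N × (Fin m ⊕ Fin m)) → ℝ :=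
  Sum.elim (Fx N A B G H α₁ α₂ x)
    (fun kr => ε - (Au m).mulVec (Sk A B α₁ α₂ x (kr.1 : ℕ)) kr.2)

def AbM (N n : ℕ) :
    Matrix ((Fin (N + 1) × Fin n) ⊕ (Fin (N + 1) × Fin n)) (Fin (N + 1) × Fin n) ℝ :=
  Matrix.fromRows 1 (-1)

def BbV (N n : ℕ) : (Fin (N + 1) × Fin n) ⊕ (Fin (N + 1) × Fin n) → ℝ := fun _ => 1

def trajOL {n m : ℕ} (A : ℕ → Matrix (Fin n) (Fin n) ℝ) (B : ℕ → Matrix (Fin n) (Fin m) ℝ)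
    (u : ℕ → Fin m → ℝ) (d : ℕ → Fin n → ℝ) (x0 : Fin n → ℝ) : ℕ → Fin n → ℝ
  | 0 => x0
  | k + 1 => (A k).mulVec (trajOL A B u d x0 k) + (B k).mulVec (u k) + d k

def Eol {n q : ℕ} (N : ℕ) (A : ℕ → Matrix (Fin n) (Fin n) ℝ)
    (G : ℕ → Matrix (Fin q) (Fin n) ℝ) :
    Matrix (Fin (N + 1) × Fin q) (Fin (N + 1) × Fin n) ℝ :=
  Matrix.of fun kr jc => (G (kr.1 : ℕ) * Eblk N A (kr.1 : ℕ)) kr.2 jc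

def Fol {n m q : ℕ} (N : ℕ) (A : ℕ → Matrix (Fin n) (Fin n) ℝ)
    (B : ℕ → Matrix (Fin n) (Fin m) ℝ) (G : ℕ → Matrix (Fin q) (Fin n) ℝ)
    (H : ℕ → Fin q → ℝ) (x : Fin n → ℝ) (ut : ℕ → Fin m → ℝ) (ε : ℝ) :
    Fin (N + 1) × Fin q → ℝ :=
  fun kr => H (kr.1 : ℕ) kr.2
    - (G (kr.1 : ℕ)).mulVec ((mprod A 0 (kr.1 : ℕ)).mulVec x) kr.2
    - ε * (G (kr.1 : ℕ)).mulVec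
        (∑ i ∈ Finset.range (kr.1 : ℕ), (mprod A (i + 1) (kr.1 : ℕ) * B i).mulVec (ut i)) kr.2

section Box

variable {ι κ : Type*} [Fintype κ] {μ : ℝ}

theorem dotProduct_le_mul_sum_abs {r w : κ → ℝ} (hw : ∀ j, |w j| ≤ μ) :
    r ⬝ᵥ w ≤ μ * ∑ j, |r j| := by
  rw [dotProduct, Finset.mul_sum]
  refine Finset.sum_le_sum fun j _ => ?_
  calc r j * w j ≤ |r j| * |w j| := (le_abs_self _).trans (abs_mul _ _).le
    _ ≤ μ * |r j| := by rw [mul_comm μ]; exact mul_le_mul_of_nonneg_left (hw j) (abs_nonneg _)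

theorem dotProduct_mul_sign (r : κ → ℝ) :
    r ⬝ᵥ (fun j => μ * SignType.sign (r j)) = μ * ∑ j, |r j| := by
  rw [dotProduct, Finset.mul_sum]
  refine Finset.sum_congr rfl fun j _ => ?_
  rw [mul_left_comm, self_mul_sign]

theorem abs_mul_sign_le (hμ : 0 ≤ μ) (a : ℝ) : |μ * SignType.sign a| ≤ μ := by
  rw [abs_mul, abs_of_nonneg hμ]
  refine mul_le_of_le_one_right hμ ?_
  rcases SignType.sign a with _ | _ | _ <;> simp

theorem forall_abs_le_mulVec_le_iff (hμ : 0 ≤ μ) (E : Matrix ι κ ℝ) (F : ι → ℝ) :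
    (∀ w : κ → ℝ, (∀ j, |w j| ≤ μ) → E *ᵥ w ≤ F) ↔ ∀ i, μ * ∑ j, |E i j| ≤ F i := by
  refine ⟨fun h i => ?_, fun h w hw i => (dotProduct_le_mul_sum_abs hw).trans (h i)⟩
  rw [← dotProduct_mul_sign]
  exact h _ (fun j => abs_mul_sign_le hμ _) i

theorem mul_fromRows_one_neg_one_apply [DecidableEq κ] (P : Matrix ι (κ ⊕ κ) ℝ) (i : ι) (j : κ) :
    (P * (Matrix.fromRows 1 (-1) : Matrix (κ ⊕ κ) κ ℝ)) i j =
      P i (Sum.inl j) - P i (Sum.inr j) := by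
  rw [Matrix.mul_apply, Fintype.sum_sum_type]
  simp [Matrix.one_apply, sub_eq_add_neg]

theorem mulVec_one_apply_sum (P : Matrix ι (κ ⊕ κ) ℝ) (i : ι) :
    (P *ᵥ fun _ => 1) i = ∑ j, (P i (Sum.inl j) + P i (Sum.inr j)) := by
  simp [Matrix.mulVec, dotProduct, Fintype.sum_sum_type, Finset.sum_add_distrib]

theorem exists_nonneg_mul_fromRows_eq_iff [DecidableEq κ] (hμ : 0 ≤ μ) (E : Matrix ι κ ℝ)
    (F : ι → ℝ) :
    (∃ P : Matrix ι (κ ⊕ κ) ℝ, (∀ i j, 0 ≤ P i j) ∧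
      P * (Matrix.fromRows 1 (-1) : Matrix (κ ⊕ κ) κ ℝ) = μ • E ∧ P *ᵥ (fun _ => 1) ≤ F) ↔
      ∀ i, μ * ∑ j, |E i j| ≤ F i := by
  constructor
  · rintro ⟨P, hP, hPE, hPF⟩ i
    have hentry : ∀ j, μ * |E i j| ≤ P i (Sum.inl j) + P i (Sum.inr j) := fun j => by
      have hdiff := mul_fromRows_one_neg_one_apply P i j
      rw [hPE, Matrix.smul_apply, smul_eq_mul] at hdiff
      rw [← abs_of_nonneg hμ, ← abs_mul, hdiff, abs_le]
      constructor <;> linarith [hP i (Sum.inl j), hP i (Sum.inr j)]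
    calc μ * ∑ j, |E i j| ≤ ∑ j, (P i (Sum.inl j) + P i (Sum.inr j)) := by
          rw [Finset.mul_sum]; exact Finset.sum_le_sum fun j _ => hentry j
      _ = (P *ᵥ fun _ => 1) i := (mulVec_one_apply_sum P i).symm
      _ ≤ F i := hPF i
  · intro h
    refine ⟨Matrix.of fun i => Sum.elim (fun j => (μ * E i j)⁺) (fun j => (μ * E i j)⁻),
      ?_, ?_, fun i => ?_⟩
    · rintro i (j | j)
      exacts [posPart_nonneg _, negPart_nonneg _]
    · ext i j
      rw [mul_fromRows_one_neg_one_apply]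
      simp [posPart_sub_negPart]
    · simpa [mulVec_one_apply_sum, posPart_add_negPart, abs_mul, abs_of_nonneg hμ,
        Finset.mul_sum] using h i

end Box

section Trajectory

variable {n m : ℕ}

theorem mprod_self (M : ℕ → Matrix (Fin n) (Fin n) ℝ) (k : ℕ) : mprod M k k = 1 := by
  simp [mprod]

theorem mprod_succ (M : ℕ → Matrix (Fin n) (Fin n) ℝ) {i k : ℕ} (h : i ≤ k) :
    mprod M i (k + 1) = M k * mprod M i k := by
  have hlen : k + 1 - i = (k - i) + 1 := by omega
  have hlast : i + 1 * (k - i) = k := by omega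
  rw [mprod, hlen, List.range'_concat, hlast, List.reverse_append, List.map_append,
    List.prod_append]
  simp [mprod]

theorem eq_mprod_mulVec_add_sum (M : ℕ → Matrix (Fin n) (Fin n) ℝ) (c y : ℕ → Fin n → ℝ)
    (hy : ∀ k, y (k + 1) = M k *ᵥ y k + c k) (k : ℕ) :
    y k = mprod M 0 k *ᵥ y 0 + ∑ i ∈ range k, mprod M (i + 1) k *ᵥ c i := by
  induction k with
  | zero => simp [mprod_self]
  | succ k ih =>
    have hshift : ∀ i ∈ range k,
        M k *ᵥ (mprod M (i + 1) k *ᵥ c i) = mprod M (i + 1) (k + 1) *ᵥ c i :=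
      fun i hi => by rw [mulVec_mulVec, mprod_succ _ (mem_range.mp hi)]
    rw [hy, ih, mulVec_add, mulVec_sum, sum_congr rfl hshift, mulVec_mulVec,
      ← mprod_succ _ k.zero_le, sum_range_succ, mprod_self, one_mulVec, add_assoc]

theorem trajCL_succ_eq_Abar (A : ℕ → Matrix (Fin n) (Fin n) ℝ) (B : ℕ → Matrix (Fin n) (Fin m) ℝ)
    (α₁ : Matrix (Fin m) (Fin n) ℝ) (α₂ : Fin m → ℝ) (d : ℕ → Fin n → ℝ) (x : Fin n → ℝ) (k : ℕ) :
    trajCL A B α₁ α₂ d x (k + 1) = Abar A B α₁ k *ᵥ trajCL A B α₁ α₂ d x k + (B k *ᵥ α₂ + d k) := by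
  rw [trajCL, Abar, add_mulVec, mulVec_add, ← mulVec_mulVec]
  abel

theorem Eblk_mulVec_eq_sum {N : ℕ} (M : ℕ → Matrix (Fin n) (Fin n) ℝ) {k : ℕ} (hk : k ≤ N)
    (w : Fin (N + 1) × Fin n → ℝ) (d : ℕ → Fin n → ℝ)
    (hw : ∀ i : Fin N, (fun c => w (i.succ, c)) = d i) :
    Eblk N M k *ᵥ w = ∑ i ∈ range k, mprod M (i + 1) k *ᵥ d i := by
  have hblock_zero : ∀ r, ∑ c, Eblk N M k r (0, c) * w (0, c) = 0 := by
    simp [Eblk]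
  have hblock_succ : ∀ i : Fin N, ∀ r, ∑ c, Eblk N M k r (i.succ, c) * w (i.succ, c) =
      if (i : ℕ) < k then (mprod M (i + 1) k *ᵥ d i) r else 0 := by
    intro i r
    simp only [Eblk, of_apply, Fin.val_succ, ← hw i, mulVec, dotProduct]
    split_ifs <;> first | omega | simp
  have hrange : (range N).filter (· < k) = range k := by
    ext i; simp only [mem_filter, mem_range]; omega
  ext r
  rw [mulVec, dotProduct, Fintype.sum_prod_type, Fin.sum_univ_succ, hblock_zero, zero_add]
  simp only [hblock_succ]
  rw [Fin.sum_univ_eq_sum_range (fun i => if i < k then (mprod M (i + 1) k *ᵥ d i) r else 0),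
    ← sum_filter, hrange, Finset.sum_apply]

theorem trajCL_eq_Fblk_add_Eblk_mulVec (A : ℕ → Matrix (Fin n) (Fin n) ℝ)
    (B : ℕ → Matrix (Fin n) (Fin m) ℝ) (α₁ : Matrix (Fin m) (Fin n) ℝ) (α₂ : Fin m → ℝ)
    (d : ℕ → Fin n → ℝ) (x : Fin n → ℝ) {N k : ℕ} (hk : k ≤ N) (w : Fin (N + 1) × Fin n → ℝ)
    (hw : ∀ i : Fin N, (fun c => w (i.succ, c)) = d i) :
    trajCL A B α₁ α₂ d x k = Fblk A B α₁ α₂ x k + Eblk N (Abar A B α₁) k *ᵥ w := by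
  rw [eq_mprod_mulVec_add_sum _ _ _ (trajCL_succ_eq_Abar A B α₁ α₂ d x), Fblk,
    Eblk_mulVec_eq_sum _ hk w d hw, trajCL]
  simp only [mulVec_add, ← mulVec_mulVec, sum_add_distrib]
  abel

end Trajectory

section Constraints

variable {n m q N : ℕ} (A : ℕ → Matrix (Fin n) (Fin n) ℝ) (B : ℕ → Matrix (Fin n) (Fin m) ℝ)
  (G : ℕ → Matrix (Fin q) (Fin n) ℝ) (H : ℕ → Fin q → ℝ)
  (α₁ : Matrix (Fin m) (Fin n) ℝ) (α₂ : Fin m → ℝ) (x : Fin n → ℝ) {ε μ : ℝ}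

theorem Au_mulVec (v : Fin m → ℝ) : Au m *ᵥ v = Sum.elim v (-v) := by
  rw [Au, fromRows_mulVec, one_mulVec, neg_mulVec, one_mulVec]

theorem norm_le_iff_Au_mulVec_le (hε : 0 ≤ ε) (v : Fin m → ℝ) :
    ‖v‖ ≤ ε ↔ ∀ s, (Au m *ᵥ v) s ≤ ε := by
  simp only [pi_norm_le_iff_of_nonneg hε, Real.norm_eq_abs, abs_le, Au_mulVec, Sum.forall,
    Sum.elim_inl, Sum.elim_inr, Pi.neg_apply, neg_le, forall_and, and_comm]

theorem Ecl_mulVec_inl_le_iff (w : Fin (N + 1) × Fin n → ℝ) (k : Fin (N + 1)) (r : Fin q) :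
    (Ecl N A B G α₁ *ᵥ w) (Sum.inl (k, r)) ≤ Fcl N A B G H α₁ α₂ x ε (Sum.inl (k, r)) ↔
      (G k *ᵥ (Fblk A B α₁ α₂ x k + Eblk N (Abar A B α₁) k *ᵥ w)) r ≤ H k r := by
  have hEx : (Ex N A B G α₁ *ᵥ w) (k, r) = (G k *ᵥ (Eblk N (Abar A B α₁) k *ᵥ w)) r := by
    rw [mulVec_mulVec]; rfl
  simp only [Ecl, fromRows_mulVec, Sum.elim_inl, Fcl, Fx, hEx, mulVec_add, Pi.add_apply]
  constructor <;> intro h <;> linarith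

theorem Ecl_mulVec_inr_le_iff (w : Fin (N + 1) × Fin n → ℝ) (k : Fin N) (s : Fin m ⊕ Fin m) :
    (Ecl N A B G α₁ *ᵥ w) (Sum.inr (k, s)) ≤ Fcl N A B G H α₁ α₂ x ε (Sum.inr (k, s)) ↔
      (Au m *ᵥ (α₁ *ᵥ (Fblk A B α₁ α₂ x k + Eblk N (Abar A B α₁) k *ᵥ w) + α₂)) s ≤ ε := by
  have hEu : (Ecl N A B G α₁ *ᵥ w) (Sum.inr (k, s)) =
      (Au m *ᵥ (α₁ *ᵥ (Eblk N (Abar A B α₁) k *ᵥ w))) s := by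
    rw [mulVec_mulVec, mulVec_mulVec]; rfl
  simp only [hEu, Fcl, Sum.elim_inr, Sk, mulVec_add, Pi.add_apply]
  constructor <;> intro h <;> linarith

theorem trajCL_constraints_iff_Ecl_mulVec_le (hε : 0 ≤ ε) (d : ℕ → Fin n → ℝ)
    (w : Fin (N + 1) × Fin n → ℝ) (hw : ∀ i : Fin N, (fun c => w (i.succ, c)) = d i) :
    ((∀ k, k ≤ N → G k *ᵥ trajCL A B α₁ α₂ d x k ≤ H k) ∧
      (∀ k, k < N → ‖α₁ *ᵥ trajCL A B α₁ α₂ d x k + α₂‖ ≤ ε)) ↔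
      Ecl N A B G α₁ *ᵥ w ≤ Fcl N A B G H α₁ α₂ x ε := by
  have htraj : ∀ k ≤ N, trajCL A B α₁ α₂ d x k = Fblk A B α₁ α₂ x k + Eblk N (Abar A B α₁) k *ᵥ w :=
    fun k hk => trajCL_eq_Fblk_add_Eblk_mulVec A B α₁ α₂ d x hk w hw
  rw [Pi.le_def, Sum.forall, Prod.forall, Prod.forall]
  simp only [Ecl_mulVec_inl_le_iff, Ecl_mulVec_inr_le_iff, Fin.forall_iff (n := N + 1),
    Fin.forall_iff (n := N), Nat.lt_succ_iff]
  refine and_congr (forall₂_congr fun k hk => ?_) (forall₂_congr fun k hk => ?_)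
  · rw [htraj k hk, Pi.le_def]
  · rw [htraj k hk.le, norm_le_iff_Au_mulVec_le hε]

theorem forall_disturbance_iff_forall_abs_le_Ecl_mulVec_le (hμ : 0 ≤ μ) (hε : 0 ≤ ε) :
    (∀ d : ℕ → Fin n → ℝ, (∀ i, i < N → ‖d i‖ ≤ μ) →
      (∀ k, k ≤ N → G k *ᵥ trajCL A B α₁ α₂ d x k ≤ H k) ∧
      (∀ k, k < N → ‖α₁ *ᵥ trajCL A B α₁ α₂ d x k + α₂‖ ≤ ε)) ↔
      ∀ w : Fin (N + 1) × Fin n → ℝ, (∀ jc, |w jc| ≤ μ) →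
        Ecl N A B G α₁ *ᵥ w ≤ Fcl N A B G H α₁ α₂ x ε := by
  constructor
  · intro hrobust w hw
    let d : ℕ → Fin n → ℝ := fun i c => if h : i < N then w ((⟨i, h⟩ : Fin N).succ, c) else 0
    have hwd : ∀ i : Fin N, (fun c => w (i.succ, c)) = d i := fun i => by
      funext c; simp only [d, dif_pos i.isLt]
    have hd : ∀ i, i < N → ‖d i‖ ≤ μ := fun i hi => by
      simpa [← hwd ⟨i, hi⟩, pi_norm_le_iff_of_nonneg hμ] using fun c => hw _
    exact (trajCL_constraints_iff_Ecl_mulVec_le A B G H α₁ α₂ x hε d w hwd).mp (hrobust d hd)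
  · intro hbox d hd
    -- block `0` is a dummy: `E_k` vanishes on it
    let w : Fin (N + 1) × Fin n → ℝ := fun jc => Fin.cases 0 (fun i => d i jc.2) jc.1
    have hwd : ∀ i : Fin N, (fun c => w (i.succ, c)) = d i := fun _ => rfl
    have hw : ∀ jc, |w jc| ≤ μ := by
      rintro ⟨j, c⟩
      cases j using Fin.cases with
      | zero => simpa [w] using hμ
      | succ i => exact (norm_le_pi_norm (d i) c).trans (hd i i.isLt)
    exact (trajCL_constraints_iff_Ecl_mulVec_le A B G H α₁ α₂ x hε d w hwd).mpr (hbox w hw)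

end Constraints

/-- Effort metric under the linear closed-loop controller, with disturbance bound `μ₀`:
the infimum of admissible input bounds `ε` in the robust formulation equals the infimum
in the Farkas-certified formulation. -/
theorem effort_closedLoop {n m q N : ℕ}
    (A : ℕ → Matrix (Fin n) (Fin n) ℝ) (B : ℕ → Matrix (Fin n) (Fin m) ℝ)
    (G : ℕ → Matrix (Fin q) (Fin n) ℝ) (H : ℕ → Fin q → ℝ)
    (x : Fin n → ℝ) (μ₀ : ℝ) (hμ₀ : 0 ≤ μ₀) :
    sInf {ε : ℝ | 0 ≤ ε ∧ ∃ (α₁ : Matrix (Fin m) (Fin n) ℝ) (α₂ : Fin m → ℝ),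
        ∀ d : ℕ → Fin n → ℝ, (∀ i, i < N → ‖d i‖ ≤ μ₀) →
          (∀ k, k ≤ N → (G k).mulVec (trajCL A B α₁ α₂ d x k) ≤ H k) ∧
          (∀ k, k < N → ‖α₁.mulVec (trajCL A B α₁ α₂ d x k) + α₂‖ ≤ ε)} =
    sInf {ε : ℝ | 0 ≤ ε ∧ ∃ (α₁ : Matrix (Fin m) (Fin n) ℝ) (α₂ : Fin m → ℝ)
        (P : Matrix ((Fin (N + 1) × Fin q) ⊕ (Fin N × (Fin m ⊕ Fin m)))
          ((Fin (N + 1) × Fin n) ⊕ (Fin (N + 1) × Fin n)) ℝ),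
        (∀ i j, 0 ≤ P i j) ∧
        P * AbM N n = μ₀ • Ecl N A B G α₁ ∧
        P.mulVec (BbV N n) ≤ Fcl N A B G H α₁ α₂ x ε} := by
  congr 1
  ext ε
  refine and_congr_right fun hε => exists₂_congr fun α₁ α₂ => ?_
  rw [forall_disturbance_iff_forall_abs_le_Ecl_mulVec_le A B G H α₁ α₂ x hμ₀ hε,
    forall_abs_le_mulVec_le_iff hμ₀]
  exact (exists_nonneg_mul_fromRows_eq_iff hμ₀ _ _).symm
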